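/- arXiv:1912.10674 — 3 statements merged into one kernel-verified Lean document; each statement's English description precedes it below -/
import Mathlib

section
/- Let Γ be a graph that is a disjoint union Γ = Γ_1 ⊔ Γ_2, and let S be an initial configuration of n vertices with p particles in Γ_1 and q = n − p particles in Γ_2. Then the graph braid group B_n(Γ, S) is isomorphic to the direct product B_p(Γ_1, S ∩ Γ_1) × B_q(Γ_2, S ∩ Γ_2). -/
/-- Ordered configurations of `n` pairwise-distinct points of a topological space. -/
def OrdConf (X : Type*) (n : ℕ) : Type _ := {f : Fin n → X // Function.Injective f}

instance (X : Type*) [TopologicalSpace X] (n : ℕ) : TopologicalSpace (OrdConf X n) :=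
  inferInstanceAs (TopologicalSpace {f : Fin n → X // Function.Injective f})

/-- The permutation-action setoid on ordered configurations. -/
def confSetoid (X : Type*) (n : ℕ) : Setoid (OrdConf X n) where
  r f g := ∃ σ : Equiv.Perm (Fin n), ∀ i, f.1 (σ i) = g.1 i
  iseqv := by
    constructor
    · exact fun f => ⟨1, fun i => rfl⟩
    · rintro f g ⟨σ, h⟩
      exact ⟨σ⁻¹, fun i => by rw [← h (σ⁻¹ i), Equiv.Perm.inv_def, Equiv.apply_symm_apply]⟩
    · rintro f g h ⟨σ, hfg⟩ ⟨τ, hgh⟩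
      exact ⟨τ.trans σ, fun i => by rw [Equiv.trans_apply, hfg (τ i), hgh i]⟩

/-- The unordered configuration space `UC_n(X)` with the quotient topology. -/
@[reducible] def UConf (X : Type*) [TopologicalSpace X] (n : ℕ) : Type _ := Quotient (confSetoid X n)

instance (X : Type*) [TopologicalSpace X] (n : ℕ) : TopologicalSpace (UConf X n) :=
  inferInstanceAs (TopologicalSpace (Quotient (confSetoid X n)))

/-- The braid group `B_n(X, S)`: the fundamental group of the unordered configuration
space of `n` points of `X` based at the configuration `S`. -/
def BraidGroupTop (X : Type*) [TopologicalSpace X] (n : ℕ) (S : UConf X n) :=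
  FundamentalGroup (UConf X n) S

noncomputable instance (X : Type*) [TopologicalSpace X] (n : ℕ) (S : UConf X n) :
    Group (BraidGroupTop X n S) :=
  inferInstanceAs (Group (FundamentalGroup (UConf X n) S))

/-!
An unordered configuration is determined by its set of points, so placing `p` points in `Γ₁` and
`q` points in `Γ₂` gives an injective map `UC_p(Γ₁) × UC_q(Γ₂) → UC_{p+q}(Γ₁ ⊔ Γ₂)`. Upstairs, on
ordered configurations, the corresponding map is an open embedding with clopen image, and the
quotient by the finite symmetric group is both an open and a closed map; hence the map of unordered
configuration spaces is an embedding whose image (the configurations with exactly `p` points in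
`Γ₁`) is clopen. Paths and path homotopies cannot leave a clopen set, so the braid group of
`Γ₁ ⊔ Γ₂` at `S` is the fundamental group of the product `UC_p(Γ₁) × UC_q(Γ₂)`, which splits.
-/

open Topology

universe u

namespace FundamentalGroup

noncomputable def mulEquivOfHomeomorph {X Y : Type u} [TopologicalSpace X] [TopologicalSpace Y]
    (h : X ≃ₜ Y) (x : X) : FundamentalGroup X x ≃* FundamentalGroup Y (h x) :=
  (FundamentalGroupoidFunctor.equivOfHomotopyEquiv h.toHomotopyEquiv).fullyFaithfulFunctor
    |>.mulEquivEnd (FundamentalGroupoid.mk x)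

noncomputable def prodMulEquiv {A B : Type*} [TopologicalSpace A] [TopologicalSpace B]
    (a : A) (b : B) :
    FundamentalGroup (A × B) (a, b) ≃* FundamentalGroup A a × FundamentalGroup B b :=
  MulEquiv.ofBijective ((map .fst (a, b)).prod (map .snd (a, b))) <| by
    refine ⟨fun γ δ h => ?_, fun γδ => ⟨Path.Homotopic.prod γδ.1 γδ.2, ?_⟩⟩
    · have hl : Path.Homotopic.projLeft γ = Path.Homotopic.projLeft δ := congrArg Prod.fst h
      have hr : Path.Homotopic.projRight γ = Path.Homotopic.projRight δ := congrArg Prod.snd h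
      rw [← Path.Homotopic.prod_projLeft_projRight γ, ← Path.Homotopic.prod_projLeft_projRight δ,
        hl, hr]
    · exact Prod.ext (Path.Homotopic.projLeft_prod _ _) (Path.Homotopic.projRight_prod _ _)

end FundamentalGroup

section Clopen

variable {X : Type*} [TopologicalSpace X] {C : Set X}

theorem IsClopen.apply_mem_of_apply_mem {Z : Type*} [TopologicalSpace Z] [PreconnectedSpace Z]
    (hC : IsClopen C) {f : Z → X} (hf : Continuous f) {z₀ : Z} (h₀ : f z₀ ∈ C) (z : Z) :
    f z ∈ C :=
  (isPreconnected_range hf).subset_isClopen hC ⟨f z₀, ⟨z₀, rfl⟩, h₀⟩ ⟨z, rfl⟩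

def Path.codRestrictOfIsClopen (hC : IsClopen C) {a b : C} (γ : Path (a : X) b) : Path a b where
  toFun t := ⟨γ t, hC.apply_mem_of_apply_mem γ.continuous (z₀ := 0) (by simp) t⟩
  continuous_toFun := γ.continuous.subtype_mk _
  source' := Subtype.ext γ.source
  target' := Subtype.ext γ.target

def Path.Homotopy.codRestrictOfIsClopen (hC : IsClopen C) {a b : C} {γ γ' : Path (a : X) b}
    (H : Path.Homotopy γ γ') :
    Path.Homotopy (γ.codRestrictOfIsClopen hC) (γ'.codRestrictOfIsClopen hC) where
  toFun st := ⟨H st, hC.apply_mem_of_apply_mem H.continuous (z₀ := (0, 0)) (by simp) st⟩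
  continuous_toFun := H.continuous.subtype_mk _
  map_zero_left t := Subtype.ext (H.apply_zero t)
  map_one_left t := Subtype.ext (H.apply_one t)
  prop' t s hs := Subtype.ext (H.prop' t s hs)

def IsClopen.fullyFaithfulMapSubtypeVal (hC : IsClopen C) :
    (FundamentalGroupoid.map ⟨((↑) : C → X), continuous_subtype_val⟩).FullyFaithful where
  preimage := Quot.lift (fun γ => Path.Homotopic.Quotient.mk (γ.codRestrictOfIsClopen hC))
    (fun _ _ h => Path.Homotopic.Quotient.eq.mpr ⟨h.some.codRestrictOfIsClopen hC⟩)
  map_preimage := by rintro a b ⟨γ⟩; rfl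
  preimage_map := by rintro a b ⟨γ⟩; rfl

noncomputable def FundamentalGroup.mulEquivOfIsClopen (hC : IsClopen C) (x : C) :
    FundamentalGroup C x ≃* FundamentalGroup X x :=
  hC.fullyFaithfulMapSubtypeVal.mulEquivEnd (FundamentalGroupoid.mk x)

end Clopen

noncomputable def FundamentalGroup.mulEquivOfIsEmbedding {A X : Type u} [TopologicalSpace A]
    [TopologicalSpace X] {f : A → X} (hf : IsEmbedding f) (hC : IsClopen (Set.range f)) (a : A) :
    FundamentalGroup A a ≃* FundamentalGroup X (f a) :=
  (mulEquivOfHomeomorph hf.toHomeomorph a).trans (mulEquivOfIsClopen hC _)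

theorem Fin.range_append {α : Type*} {m n : ℕ} (a : Fin m → α) (b : Fin n → α) :
    Set.range (Fin.append a b) = Set.range a ∪ Set.range b := by
  rw [← Set.Sum.elim_range, ← Fin.append_comp_sumElim]
  exact (finSumFinEquiv.surjective.range_comp _).symm

section SumAppend

variable {X Y : Type*} {n p q : ℕ}

def Fin.sumAppend (ab : (Fin p → X) × (Fin q → Y)) : Fin (p + q) → X ⊕ Y :=
  Fin.append (Sum.inl ∘ ab.1) (Sum.inr ∘ ab.2)

def OrdConf.reindex (σ : Equiv.Perm (Fin n)) (g : OrdConf X n) : OrdConf X n :=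
  ⟨g.1 ∘ σ, g.2.comp σ.injective⟩

def OrdConf.sumAppend (g : OrdConf X p × OrdConf Y q) : OrdConf (X ⊕ Y) (p + q) :=
  ⟨Fin.sumAppend (g.1.1, g.2.1), Fin.append_injective_iff.mpr
    ⟨Sum.inl_injective.comp g.1.2, Sum.inr_injective.comp g.2.2, fun _ _ => Sum.inl_ne_inr⟩⟩

theorem OrdConf.range_sumAppend (g : OrdConf X p × OrdConf Y q) :
    Set.range (OrdConf.sumAppend g).1 =
      Sum.inl '' Set.range g.1.1 ∪ Sum.inr '' Set.range g.2.1 := by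
  rw [← Set.range_comp, ← Set.range_comp]
  exact Fin.range_append _ _

theorem OrdConf.range_sumAppend_eq_preimage :
    Set.range (OrdConf.sumAppend (X := X) (Y := Y) (p := p) (q := q)) =
      Subtype.val ⁻¹' Set.range Fin.sumAppend := by
  refine Set.Subset.antisymm ?_ ?_
  · rintro _ ⟨g, rfl⟩
    exact ⟨_, rfl⟩
  · rintro g ⟨ab, hab⟩
    have hinj := g.2
    rw [← hab, Fin.sumAppend, Fin.append_injective_iff] at hinj
    exact ⟨(⟨ab.1, hinj.1.of_comp⟩, ⟨ab.2, hinj.2.1.of_comp⟩), Subtype.ext hab⟩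

variable [TopologicalSpace X] [TopologicalSpace Y]

theorem Fin.sumAppend_eq_comp : Fin.sumAppend (X := X) (Y := Y) (p := p) (q := q) =
    Fin.appendHomeomorph p q ∘ Prod.map (Pi.map fun _ => Sum.inl) (Pi.map fun _ => Sum.inr) :=
  rfl

theorem Fin.isClosedEmbedding_sumAppend :
    IsClosedEmbedding (Fin.sumAppend (X := X) (Y := Y) (p := p) (q := q)) := by
  rw [Fin.sumAppend_eq_comp]
  exact (Fin.appendHomeomorph p q).isClosedEmbedding.comp
    ((IsClosedEmbedding.piMap fun _ => .inl).prodMap (IsClosedEmbedding.piMap fun _ => .inr))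

theorem Fin.isOpenEmbedding_sumAppend :
    IsOpenEmbedding (Fin.sumAppend (X := X) (Y := Y) (p := p) (q := q)) := by
  rw [Fin.sumAppend_eq_comp]
  exact (Fin.appendHomeomorph p q).isOpenEmbedding.comp
    ((IsOpenEmbedding.piMap fun _ => .inl).prodMap (IsOpenEmbedding.piMap fun _ => .inr))

theorem OrdConf.isEmbedding_val : IsEmbedding (Subtype.val : OrdConf X n → Fin n → X) :=
  IsEmbedding.subtypeVal

theorem OrdConf.continuous_reindex (σ : Equiv.Perm (Fin n)) :
    Continuous (OrdConf.reindex (X := X) σ) :=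
  isEmbedding_val.continuous_iff.mpr <|
    continuous_pi fun i => (continuous_apply (σ i)).comp isEmbedding_val.continuous

theorem OrdConf.isOpenEmbedding_sumAppend :
    IsOpenEmbedding (OrdConf.sumAppend (X := X) (Y := Y) (p := p) (q := q)) := by
  refine ⟨isEmbedding_val.of_comp_iff.mp ?_, ?_⟩
  · exact Fin.isOpenEmbedding_sumAppend.isEmbedding.comp (isEmbedding_val.prodMap isEmbedding_val)
  · rw [range_sumAppend_eq_preimage]
    exact Fin.isOpenEmbedding_sumAppend.isOpen_range.preimage isEmbedding_val.continuous

theorem OrdConf.isClosed_range_sumAppend :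
    IsClosed (Set.range (OrdConf.sumAppend (X := X) (Y := Y) (p := p) (q := q))) := by
  rw [range_sumAppend_eq_preimage]
  exact Fin.isClosedEmbedding_sumAppend.isClosed_range.preimage isEmbedding_val.continuous

end SumAppend

namespace UConf

variable {X Y : Type*} [TopologicalSpace X] [TopologicalSpace Y] {n p q : ℕ}

abbrev mk (g : OrdConf X n) : UConf X n := Quotient.mk (confSetoid X n) g

theorem isQuotientMap_mk : IsQuotientMap (mk (X := X) (n := n)) :=
  isQuotientMap_quotient_mk'

theorem mk_eq_mk_iff {g h : OrdConf X n} : mk g = mk h ↔ ∃ σ, g.reindex σ = h :=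
  Quotient.eq.trans ⟨fun ⟨σ, hσ⟩ => ⟨σ, Subtype.ext (funext hσ)⟩,
    fun ⟨σ, hσ⟩ => ⟨σ, congrFun (congrArg Subtype.val hσ)⟩⟩

theorem mk_eq_mk_iff_range_eq {g h : OrdConf X n} :
    mk g = mk h ↔ Set.range g.1 = Set.range h.1 := by
  refine mk_eq_mk_iff.trans ⟨?_, fun hr => ?_⟩
  · rintro ⟨σ, rfl⟩
    exact (σ.surjective.range_comp g.1).symm
  · refine ⟨(Equiv.ofInjective h.1 h.2).trans
      ((Equiv.setCongr hr.symm).trans (Equiv.ofInjective g.1 g.2).symm), Subtype.ext ?_⟩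
    funext i
    exact Equiv.apply_ofInjective_symm g.2 _

theorem preimage_image_mk (S : Set (OrdConf X n)) :
    mk ⁻¹' (mk '' S) = ⋃ σ : Equiv.Perm (Fin n), OrdConf.reindex σ ⁻¹' S := by
  ext g
  simp only [Set.mem_preimage, Set.mem_image, Set.mem_iUnion]
  constructor
  · rintro ⟨s, hs, hsg⟩
    obtain ⟨σ, rfl⟩ := mk_eq_mk_iff.mp hsg.symm
    exact ⟨σ, hs⟩
  · rintro ⟨σ, hσ⟩
    exact ⟨_, hσ, (mk_eq_mk_iff.mpr ⟨σ, rfl⟩).symm⟩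

theorem isOpenQuotientMap_mk : IsOpenQuotientMap (mk (X := X) (n := n)) where
  surjective := Quotient.mk_surjective
  continuous := isQuotientMap_mk.continuous
  isOpenMap S hS := by
    rw [← isQuotientMap_mk.isOpen_preimage, preimage_image_mk]
    exact isOpen_iUnion fun σ => hS.preimage (OrdConf.continuous_reindex σ)

theorem isClosedMap_mk : IsClosedMap (mk (X := X) (n := n)) := by
  intro S hS
  rw [← isQuotientMap_mk.isClosed_preimage, preimage_image_mk]
  exact isClosed_iUnion_of_finite fun σ => hS.preimage (OrdConf.continuous_reindex σ)

theorem isOpenQuotientMap_prodMap_mk :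
    IsOpenQuotientMap (Prod.map mk mk : OrdConf X p × OrdConf Y q → UConf X p × UConf Y q) :=
  isOpenQuotientMap_mk.prodMap isOpenQuotientMap_mk

theorem mk_sumAppend_eq_mk_sumAppend {g g' : OrdConf X p × OrdConf Y q} (h₁ : mk g.1 = mk g'.1)
    (h₂ : mk g.2 = mk g'.2) : mk (OrdConf.sumAppend g) = mk (OrdConf.sumAppend g') := by
  rw [mk_eq_mk_iff_range_eq] at h₁ h₂ ⊢
  rw [OrdConf.range_sumAppend, OrdConf.range_sumAppend, h₁, h₂]

def sumAppend (c : UConf X p × UConf Y q) : UConf (X ⊕ Y) (p + q) :=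
  Quotient.map₂ (fun g₁ g₂ => OrdConf.sumAppend (g₁, g₂))
    (fun _ _ h₁ _ _ h₂ => Quotient.exact <|
      mk_sumAppend_eq_mk_sumAppend (Quotient.sound h₁) (Quotient.sound h₂)) c.1 c.2

theorem sumAppend_comp_prodMap_mk :
    sumAppend ∘ Prod.map mk mk = mk ∘ OrdConf.sumAppend (X := X) (Y := Y) (p := p) (q := q) :=
  rfl

theorem injective_sumAppend :
    Function.Injective (sumAppend (X := X) (Y := Y) (p := p) (q := q)) := by
  intro c c' h
  obtain ⟨g, rfl⟩ := isOpenQuotientMap_prodMap_mk.surjective c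
  obtain ⟨g', rfl⟩ := isOpenQuotientMap_prodMap_mk.surjective c'
  change mk (OrdConf.sumAppend g) = mk (OrdConf.sumAppend g') at h
  rw [mk_eq_mk_iff_range_eq, OrdConf.range_sumAppend, OrdConf.range_sumAppend] at h
  have h₁ := congrArg (Sum.inl ⁻¹' ·) h
  have h₂ := congrArg (Sum.inr ⁻¹' ·) h
  simp only [Set.preimage_union, Set.preimage_image_eq _ Sum.inl_injective,
    Set.preimage_image_eq _ Sum.inr_injective, Set.preimage_inl_image_inr,
    Set.preimage_inr_image_inl, Set.union_empty, Set.empty_union] at h₁ h₂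
  exact Prod.ext (mk_eq_mk_iff_range_eq.mpr h₁) (mk_eq_mk_iff_range_eq.mpr h₂)

theorem continuous_sumAppend : Continuous (sumAppend (X := X) (Y := Y) (p := p) (q := q)) := by
  rw [isOpenQuotientMap_prodMap_mk.isQuotientMap.continuous_iff, sumAppend_comp_prodMap_mk]
  exact isQuotientMap_mk.continuous.comp OrdConf.isOpenEmbedding_sumAppend.continuous

theorem isOpenMap_sumAppend : IsOpenMap (sumAppend (X := X) (Y := Y) (p := p) (q := q)) := by
  intro W hW
  rw [← isOpenQuotientMap_prodMap_mk.surjective.image_preimage W, ← Set.image_comp,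
    sumAppend_comp_prodMap_mk, Set.image_comp]
  exact isOpenQuotientMap_mk.isOpenMap _ (OrdConf.isOpenEmbedding_sumAppend.isOpenMap _
    (hW.preimage isOpenQuotientMap_prodMap_mk.continuous))

theorem isEmbedding_sumAppend : IsEmbedding (sumAppend (X := X) (Y := Y) (p := p) (q := q)) :=
  (IsOpenEmbedding.of_continuous_injective_isOpenMap continuous_sumAppend injective_sumAppend
    isOpenMap_sumAppend).isEmbedding

theorem isClopen_range_sumAppend :
    IsClopen (Set.range (sumAppend (X := X) (Y := Y) (p := p) (q := q))) := by
  rw [← isOpenQuotientMap_prodMap_mk.surjective.range_comp, sumAppend_comp_prodMap_mk,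
    Set.range_comp]
  exact ⟨isClosedMap_mk _ OrdConf.isClosed_range_sumAppend,
    isOpenQuotientMap_mk.isOpenMap _ OrdConf.isOpenEmbedding_sumAppend.isOpen_range⟩

end UConf

/-- If `Γ = Γ₁ ⊔ Γ₂` and the initial configuration `S` of `n` points has
`p` particles in `Γ₁` and `q = n - p` particles in `Γ₂`, then
`B_n(Γ, S) ≅ B_p(Γ₁, S ∩ Γ₁) × B_q(Γ₂, S ∩ Γ₂)`. -/
theorem braidGroup_disjointUnion (Γ₁ Γ₂ : Type) [TopologicalSpace Γ₁] [TopologicalSpace Γ₂]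
    (n p q : ℕ) (hpq : n = p + q)
    (f : Fin n → Γ₁ ⊕ Γ₂) (hf : Function.Injective f)
    (f₁ : Fin p → Γ₁) (hf₁ : Function.Injective f₁)
    (f₂ : Fin q → Γ₂) (hf₂ : Function.Injective f₂)
    (hsplit : Set.range f = Sum.inl '' Set.range f₁ ∪ Sum.inr '' Set.range f₂) :
    Nonempty
      (BraidGroupTop (Γ₁ ⊕ Γ₂) n (Quotient.mk (confSetoid _ _) ⟨f, hf⟩) ≃*
        BraidGroupTop Γ₁ p (Quotient.mk (confSetoid _ _) ⟨f₁, hf₁⟩) ×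
          BraidGroupTop Γ₂ q (Quotient.mk (confSetoid _ _) ⟨f₂, hf₂⟩)) := by
  subst hpq
  have hbase : Quotient.mk (confSetoid _ _) ⟨f, hf⟩ =
      UConf.sumAppend (UConf.mk ⟨f₁, hf₁⟩, UConf.mk ⟨f₂, hf₂⟩) :=
    UConf.mk_eq_mk_iff_range_eq.mpr <|
      hsplit.trans (OrdConf.range_sumAppend (⟨f₁, hf₁⟩, ⟨f₂, hf₂⟩)).symm
  rw [hbase]
  exact ⟨(FundamentalGroup.mulEquivOfIsEmbedding UConf.isEmbedding_sumAppend
    UConf.isClopen_range_sumAppend _).symm.trans (FundamentalGroup.prodMulEquiv _ _)⟩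
end

section
/- Two oriented edges (e_1, S_1) and (e_2, S_2) of the combinatorial configuration space UC_n(Γ) are dual to the same oriented hyperplane if and only if e_1 = e_2 and the configurations S_1 \ {o(e_1)} and S_2 \ {o(e_2)} lie in the same connected component of the configuration space C_{n−1}(Γ \ e_1) of the graph Γ with the open edge e_1 and its endpoints removed. -/
variable {V : Type*} [DecidableEq V]

/-- An oriented edge of the combinatorial configuration space `UC_n(Γ)`: an oriented
edge `(a, b)` of `Γ` together with an `n`-element configuration `S` containing the
origin `a` but not the terminus `b`. -/
structure OrEdgeUC (G : SimpleGraph V) (n : ℕ) where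
  a : V
  b : V
  adj : G.Adj a b
  S : Finset V
  card : S.card = n
  memS : a ∈ S
  notMemS : b ∉ S

/-- Two oriented edges of `UC_n(Γ)` are opposite (parallel) sides of a square: they carry
the same oriented edge of `Γ`, and their configurations differ by moving one other
particle along an edge of `Γ` disjoint from it. -/
def SquareParallel (G : SimpleGraph V) (n : ℕ) (E F : OrEdgeUC G n) : Prop :=
  E.a = F.a ∧ E.b = F.b ∧
    ∃ c d : V, G.Adj c d ∧ c ≠ E.a ∧ c ≠ E.b ∧ d ≠ E.a ∧ d ≠ E.b ∧
      c ∈ E.S ∧ d ∉ E.S ∧ F.S = insert d (E.S.erase c)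

/-- Two oriented edges are dual to the same oriented hyperplane when they are related by
a chain of edges which are parallel sides of squares. -/
def SameOrientedHyperplane (G : SimpleGraph V) (n : ℕ) (E F : OrEdgeUC G n) : Prop :=
  Relation.EqvGen (SquareParallel G n) E F

/-- An elementary move of a configuration in the configuration space `C_{n-1}(Γ ∖ e)` of
the graph `Γ` with the open edge `e = (a, b)` and its endpoints removed: one particle
moves along an edge of `Γ` disjoint from `e`, and the configurations avoid `a` and `b`. -/
def MoveAvoiding (G : SimpleGraph V) (a b : V) (S T : Finset V) : Prop :=
  a ∉ S ∧ b ∉ S ∧ a ∉ T ∧ b ∉ T ∧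
    ∃ c d : V, G.Adj c d ∧ c ≠ a ∧ c ≠ b ∧ d ≠ a ∧ d ≠ b ∧
      c ∈ S ∧ d ∉ S ∧ T = insert d (S.erase c)

private lemma OrEdgeUC.ext' {G : SimpleGraph V} {n : ℕ} {E F : OrEdgeUC G n}
    (h1 : E.a = F.a) (h2 : E.b = F.b) (h3 : E.S = F.S) : E = F := by
  cases E; cases F; simp_all

/-- Auxiliary constructor. -/
private def mkE (G : SimpleGraph V) (n : ℕ) (a b : V) (adj : G.Adj a b) (T : Finset V)
    (hc : T.card = n - 1) (hn : 0 < n) (ha : a ∉ T) (hb : b ∉ T) : OrEdgeUC G n where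
  a := a
  b := b
  adj := adj
  S := insert a T
  card := by rw [Finset.card_insert_of_notMem ha, hc]; omega
  memS := Finset.mem_insert_self _ _
  notMemS := by simp [Finset.mem_insert, adj.ne', hb]

private lemma move_card {G : SimpleGraph V} {a b : V} {S T : Finset V}
    (h : MoveAvoiding G a b S T) : S.card = T.card := by
  obtain ⟨-, -, -, -, c, d, -, -, -, -, -, hc, hd, hT⟩ := h
  have hcpos : 0 < S.card := Finset.card_pos.mpr ⟨c, hc⟩
  subst hT
  rw [Finset.card_insert_of_notMem (fun hmem => hd (Finset.mem_of_mem_erase hmem)),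
    Finset.card_erase_of_mem hc]
  omega

private lemma eqv_invariant {G : SimpleGraph V} {a b : V} {S T : Finset V}
    (h : Relation.EqvGen (MoveAvoiding G a b) S T) :
    S.card = T.card ∧ ((a ∉ S ∧ b ∉ S) ↔ (a ∉ T ∧ b ∉ T)) := by
  induction h with
  | rel S T h =>
      obtain ⟨h1, h2, h3, h4, -⟩ := id h
      exact ⟨move_card h, by tauto⟩
  | refl S => exact ⟨rfl, Iff.rfl⟩
  | symm S T _ ih => exact ⟨ih.1.symm, ih.2.symm⟩
  | trans S U T _ _ ih1 ih2 => exact ⟨ih1.1.trans ih2.1, ih1.2.trans ih2.2⟩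

private lemma back {G : SimpleGraph V} {n : ℕ} {a b : V} (adj : G.Adj a b) (hn : 0 < n)
    {S T : Finset V} (h : Relation.EqvGen (MoveAvoiding G a b) S T) :
    ∀ (hSc : S.card = n - 1) (hSa : a ∉ S) (hSb : b ∉ S)
      (hTc : T.card = n - 1) (hTa : a ∉ T) (hTb : b ∉ T),
      SameOrientedHyperplane G n (mkE G n a b adj S hSc hn hSa hSb)
        (mkE G n a b adj T hTc hn hTa hTb) := by
  induction h with
  | rel S T h =>
      intro hSc hSa hSb hTc hTa hTb
      obtain ⟨-, -, -, -, c, d, hcd, hca, hcb, hda, hdb, hcS, hdS, hT⟩ := h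
      refine Relation.EqvGen.rel _ _ ⟨rfl, rfl, c, d, hcd, hca, hcb, hda, hdb, ?_, ?_, ?_⟩
      · exact Finset.mem_insert_of_mem hcS
      · exact fun hm => ((Finset.mem_insert.mp hm).elim (fun h => hda h) hdS)
      · show insert a T = insert d ((insert a S).erase c)
        rw [hT, Finset.erase_insert_of_ne hca.symm]
        exact Finset.insert_comm a d _
  | refl S =>
      intro _ _ _ _ _ _
      exact Relation.EqvGen.refl _
  | symm S T h ih =>
      intro hSc hSa hSb hTc hTa hTb
      exact Relation.EqvGen.symm _ _ (ih hTc hTa hTb hSc hSa hSb)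
  | trans S U T h1 h2 ih1 ih2 =>
      intro hSc hSa hSb hTc hTa hTb
      have inv := eqv_invariant h1
      have hUc : U.card = n - 1 := inv.1 ▸ hSc
      have hU : a ∉ U ∧ b ∉ U := inv.2.mp ⟨hSa, hSb⟩
      exact Relation.EqvGen.trans _ _ _ (ih1 hSc hSa hSb hUc hU.1 hU.2)
        (ih2 hUc hU.1 hU.2 hTc hTa hTb)

private lemma sq_move {G : SimpleGraph V} {n : ℕ} {E F : OrEdgeUC G n}
    (h : SquareParallel G n E F) :
    E.a = F.a ∧ E.b = F.b ∧
      MoveAvoiding G E.a E.b (E.S.erase E.a) (F.S.erase F.a) := by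
  obtain ⟨ha, hb, c, d, hcd, hca, hcb, hda, hdb, hcS, hdS, hFS⟩ := h
  refine ⟨ha, hb, ?_, ?_, ?_, ?_, c, d, hcd, hca, hcb, hda, hdb, ?_, ?_, ?_⟩
  · simp
  · exact fun hmem => E.notMemS (Finset.mem_of_mem_erase hmem)
  · rw [ha]; simp
  · rw [hb]; exact fun hmem => F.notMemS (Finset.mem_of_mem_erase hmem)
  · exact Finset.mem_erase.mpr ⟨hca, hcS⟩
  · exact fun hmem => hdS (Finset.mem_of_mem_erase hmem)
  · rw [← ha, hFS, Finset.erase_insert_of_ne hda, Finset.erase_right_comm]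

/-- Two oriented edges `(e₁, S₁)` and `(e₂, S₂)` of `UC_n(Γ)` are dual
to the same oriented hyperplane if and only if `e₁ = e₂` and the configurations
`S₁ ∖ {o(e₁)}`, `S₂ ∖ {o(e₂)}` lie in the same connected component of the configuration
space `C_{n-1}(Γ ∖ e₁)`. -/
theorem sameOrientedHyperplane_iff (G : SimpleGraph V) (n : ℕ) (E F : OrEdgeUC G n) :
    SameOrientedHyperplane G n E F ↔
      E.a = F.a ∧ E.b = F.b ∧
        Relation.EqvGen (MoveAvoiding G E.a E.b) (E.S.erase E.a) (F.S.erase F.a) := by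
  constructor
  · intro h
    induction h with
    | rel E F h =>
        obtain ⟨h1, h2, h3⟩ := sq_move h
        exact ⟨h1, h2, Relation.EqvGen.rel _ _ h3⟩
    | refl E => exact ⟨rfl, rfl, Relation.EqvGen.refl _⟩
    | symm E F h ih =>
        obtain ⟨h1, h2, h3⟩ := ih
        have hrel : MoveAvoiding G F.a F.b = MoveAvoiding G E.a E.b := by rw [h1, h2]
        exact ⟨h1.symm, h2.symm, hrel ▸ Relation.EqvGen.symm _ _ h3⟩
    | trans E M F h1 h2 ih1 ih2 =>
        obtain ⟨ha1, hb1, hm1⟩ := ih1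
        obtain ⟨ha2, hb2, hm2⟩ := ih2
        have hrel : MoveAvoiding G M.a M.b = MoveAvoiding G E.a E.b := by rw [ha1, hb1]
        rw [hrel] at hm2
        exact ⟨ha1.trans ha2, hb1.trans hb2, Relation.EqvGen.trans _ _ _ hm1 hm2⟩
  · rintro ⟨ha, hb, h⟩
    have hn : 0 < n := by
      have := E.card
      have := Finset.card_pos.mpr ⟨E.a, E.memS⟩
      omega
    have hSc : (E.S.erase E.a).card = n - 1 := by
      rw [Finset.card_erase_of_mem E.memS, E.card]
    have hTc : (F.S.erase F.a).card = n - 1 := by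
      rw [Finset.card_erase_of_mem F.memS, F.card]
    have hSa : E.a ∉ E.S.erase E.a := Finset.notMem_erase _ _
    have hSb : E.b ∉ E.S.erase E.a := fun hm => E.notMemS (Finset.mem_of_mem_erase hm)
    have hTa : E.a ∉ F.S.erase F.a := by rw [ha]; exact Finset.notMem_erase _ _
    have hTb : E.b ∉ F.S.erase F.a := by
      rw [hb]; exact fun hm => F.notMemS (Finset.mem_of_mem_erase hm)
    have key := back E.adj hn h hSc hSa hSb hTc hTa hTb
    have hE : mkE G n E.a E.b E.adj (E.S.erase E.a) hSc hn hSa hSb = E :=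
      OrEdgeUC.ext' rfl rfl (Finset.insert_erase E.memS)
    have hFS : insert E.a (F.S.erase F.a) = F.S := by
      rw [ha]; exact Finset.insert_erase F.memS
    have hF : mkE G n E.a E.b E.adj (F.S.erase F.a) hTc hn hTa hTb = F :=
      OrEdgeUC.ext' ha hb hFS
    rwa [hE, hF] at key
end

section
/- The link of every vertex of the combinatorial configuration space UC_n(Γ) is a flag simplicial complex; consequently UC_n(Γ) is a nonpositively curved cube complex (a disjoint union of such). -/
variable {V : Type*} [DecidableEq V]

/-- The oriented edge `(a, b)` of `Γ` is applicable at the configuration `S`. -/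
def Appl (G : SimpleGraph V) (S : Finset V) (a b : V) : Prop :=
  G.Adj a b ∧ a ∈ S ∧ b ∉ S

/-- The configuration obtained from `S` by moving the particle at `a` to `b`. -/
def moveTo (S : Finset V) (a b : V) : Finset V := insert b (S.erase a)

/-- Two moves applicable at `S` span a square of `UC_n(Γ)`: each remains applicable
after performing the other. -/
def SpanSquare (G : SimpleGraph V) (S : Finset V) (m m' : V × V) : Prop :=
  Appl G (moveTo S m.1 m.2) m'.1 m'.2 ∧ Appl G (moveTo S m'.1 m'.2) m.1 m.2

/-- The link of every vertex of `UC_n(Γ)` is a flag simplicial complex: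
if a finite family of moves applicable at a configuration `S` pairwise spans squares
(its members are pairwise adjacent in the link), then the labelling edges of `Γ` are
pairwise disjoint, i.e. the family spans a cube of `UC_n(Γ)`. Consequently `UC_n(Γ)` is
a (disjoint union of) nonpositively curved cube complex(es). -/
theorem link_flag_UC (G : SimpleGraph V) (n : ℕ) (S : Finset V) (hS : S.card = n)
    (M : Finset (V × V)) (happl : ∀ m ∈ M, Appl G S m.1 m.2)
    (hpair : ∀ m ∈ M, ∀ m' ∈ M, m ≠ m' → SpanSquare G S m m') :
    ∀ m ∈ M, ∀ m' ∈ M, m ≠ m' →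
      ({m.1, m.2} : Finset V) ∩ {m'.1, m'.2} = ∅ := by
  rintro ⟨a, b⟩ hm ⟨c, d⟩ hm' hne
  obtain ⟨hadj, haS, hbS⟩ := happl _ hm
  obtain ⟨hadj', hcS, hdS⟩ := happl _ hm'
  obtain ⟨⟨_, hc1, hd1⟩, ⟨_, ha1, hb1⟩⟩ := hpair _ hm _ hm' hne
  simp only [moveTo, Finset.mem_insert, Finset.mem_erase] at hc1 hd1 ha1 hb1
  have hab : a ≠ b := hadj.ne
  have hcd : c ≠ d := hadj'.ne
  have had : a ≠ d := fun h => hdS (h ▸ haS)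
  have hcb : c ≠ b := fun h => hbS (h ▸ hcS)
  have hac : a ≠ c := by
    rcases ha1 with h | ⟨h, _⟩
    · exact absurd (h ▸ haS) hdS
    · exact h
  have hbd : b ≠ d := by
    intro h
    exact hd1 (Or.inl h.symm)
  apply Finset.eq_empty_of_forall_notMem
  intro x hx
  simp only [Finset.mem_inter, Finset.mem_insert, Finset.mem_singleton] at hx
  rcases hx with ⟨h1 | h1, h2 | h2⟩ <;> subst h1 <;>
    first
      | exact hac h2 | exact had h2 | exact hcb h2.symm | exact hbd h2
end
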